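/- arXiv:0901.0139 — 8 statements merged into one kernel-verified Lean document; each statement's English description precedes it below -/
import Mathlib

section
/- Let ψ_1, ψ_2, …, ψ_{n+1} be complex polynomials with ψ_1'' = 0, ψ_1 ≠ 0, and ψ_k'' = ψ_{k−1} for 2 ≤ k ≤ n+1, and set Θ_j = W(ψ_1, …, ψ_j) for j = n, n+1 (with Θ_0 = 1). Then the consecutive Wronskians satisfy the bilinear (Tkachenko) equation Θ_{n+1}'' Θ_n − 2 Θ_{n+1}' Θ_n' + Θ_{n+1} Θ_n'' = 0 identically. In particular the Adler–Moser polynomials, which are such Wronskians of the polynomials θ_1, θ_3, …, θ_{2n+1} generated by exp(zλ − ∑_{j≥2} κ_j λ^{2j−1}/(2j−1)) (these satisfy θ_{2k−1}'' = θ_{2k−3}), solve this equation. -/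
open Polynomial

/-- The Wronskian of a finite family of polynomials:
`W(p_1, …, p_ℓ) = det [ (d/dz)^{i-1} p_j ]`. -/
noncomputable def wronskian {l : ℕ} (p : Fin l → Polynomial ℂ) : Polynomial ℂ :=
  (Matrix.of fun i j : Fin l => (Polynomial.derivative^[(i : ℕ)] (p j))).det

/-!
Write `W(a, b)` for the Wronskian determinant of `ψ_1, …, ψ_{n+1}` with its last two rows
replaced by the derivatives of orders `a` and `b`, so `Θ_{n+1} = W(n-1, n)`, and `V(a, b)` for the
same object built from `ψ_1, …, ψ_n`. Differentiating row by row gives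
`Θ_{n+1}' = W(n-1, n+1)`, `Θ_{n+1}'' = W(n, n+1) + W(n-1, n+2)`, and likewise for `Θ_n`. The
bilinear equation is then the sum of two three-term Plücker relations
`[O a b][O c d] - [O a c][O b d] + [O a d][O b c] = 0` between determinants sharing `n - 1` rows
`O`, both consequences of Cramer's rule. In the first, `O` are the derivatives of orders
`0, …, n-2` and `d` is the last unit vector, which turns `W(·, ·)` into `V(n-2, ·)`. In the
second, `O` are the derivatives of orders `0, 2, 3, …, n-1`: as `ψ_1'' = 0` and
`ψ_k'' = ψ_{k-1}`, a determinant whose remaining two rows have orders at least `2` is `±ψ_1`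
times a `V`, and `ψ_1 ≠ 0` cancels.
-/

open Matrix

variable {R : Type*} [CommRing R]

namespace Matrix

variable {n : Type*} [Fintype n] [DecidableEq n]

def detUpdateRows (M : Matrix n n R) (p q : n) (x y : n → R) : R :=
  ((M.updateRow p x).updateRow q y).det

variable (M : Matrix n n R) {p q : n}

theorem detUpdateRows_swap (hpq : p ≠ q) (x y : n → R) :
    M.detUpdateRows p q y x = -M.detUpdateRows p q x y := by
  have hperm : (M.updateRow p y).updateRow q x
      = ((M.updateRow p x).updateRow q y).submatrix (Equiv.swap p q) id := by
    ext i j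
    rcases eq_or_ne i p with rfl | hip
    · simp [updateRow_apply, hpq]
    rcases eq_or_ne i q with rfl | hiq
    · simp [updateRow_apply, hpq]
    · simp [updateRow_apply, hip, hiq, Equiv.swap_apply_of_ne_of_ne]
  rw [detUpdateRows, hperm, det_permute, Equiv.Perm.sign_swap hpq, detUpdateRows]
  simp

theorem detUpdateRows_sum (x c : n → R) (v : n → n → R) :
    M.detUpdateRows p q x (∑ i, c i • v i) = ∑ i, c i * M.detUpdateRows p q x (v i) := by
  have h := map_sum (detRowAlternating.toMultilinearMap.toLinearMap (M.updateRow p x) q)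
    (fun i => c i • v i) Finset.univ
  simp only [map_smul, smul_eq_mul] at h
  exact h

theorem detUpdateRows_smul (x : n → R) (c : R) (y : n → R) :
    M.detUpdateRows p q x (c • y) = c * M.detUpdateRows p q x y :=
  det_updateRow_smul _ _ _ _

theorem detUpdateRows_row_eq_zero (x : n → R) {i : n} (hip : i ≠ p) (hiq : i ≠ q) :
    M.detUpdateRows p q x (M i) = 0 :=
  det_zero_of_row_eq hiq (by rw [updateRow_self, updateRow_ne hiq, updateRow_ne hip])

theorem detUpdateRows_self_left (y : n → R) :
    M.detUpdateRows p q (M p) y = (M.updateRow q y).det := by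
  rw [detUpdateRows, updateRow_eq_self]

theorem sum_det_updateRow_smul (A : Matrix n n R) (d : n → R) :
    ∑ i, (A.updateRow i d).det • A i = A.det • d := by
  have h := mulVec_cramer Aᵀ d
  rw [det_transpose] at h
  ext j
  simpa [mulVec, dotProduct, cramer_transpose_apply, Finset.sum_apply, mul_comm] using congrFun h j

theorem detUpdateRows_pluecker (hpq : p ≠ q) (a b c d : n → R) :
    M.detUpdateRows p q a b * M.detUpdateRows p q c d
      - M.detUpdateRows p q a c * M.detUpdateRows p q b d
      + M.detUpdateRows p q a d * M.detUpdateRows p q b c = 0 := by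
  -- apply `x ↦ [O a x]` to Cramer's rule for the matrix `A = [O b c]` and the vector `d`
  set A := (M.updateRow p b).updateRow q c
  have hO : ∀ i, i ≠ p ∧ i ≠ q →
      (A.updateRow i d).det * M.detUpdateRows p q a (A i) = 0 := by
    rintro i ⟨hip, hiq⟩
    rw [show A i = M i by simp [A, updateRow_ne hip, updateRow_ne hiq],
      detUpdateRows_row_eq_zero M a hip hiq, mul_zero]
  have h := congrArg (M.detUpdateRows p q a) (sum_det_updateRow_smul A d)
  rw [detUpdateRows_sum M a _ A, detUpdateRows_smul, Fintype.sum_eq_add p q hpq hO] at h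
  have hAp : A p = b := by simp [A, updateRow_ne hpq]
  have hAq : A q = c := by simp [A]
  have hdp : (A.updateRow p d).det = M.detUpdateRows p q d c := by
    simp [A, detUpdateRows, updateRow_comm _ hpq]
  have hdq : (A.updateRow q d).det = M.detUpdateRows p q b d := by
    simp [A, detUpdateRows]
  have hA : A.det = M.detUpdateRows p q b c := rfl
  rw [hAp, hAq, hA, hdp, hdq, detUpdateRows_swap M hpq] at h
  linear_combination -h

theorem det_updateRow_last_single {k : ℕ} (A : Matrix (Fin (k + 1)) (Fin (k + 1)) R) :
    (A.updateRow (Fin.last k) (Pi.single (Fin.last k) 1)).det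
      = (A.submatrix Fin.castSucc Fin.castSucc).det := by
  rw [← adjugate_apply, adjugate_fin_succ_eq_det_submatrix, Fin.succAbove_last,
    ← two_mul, pow_mul, neg_one_sq, one_pow, one_mul]

theorem det_eq_mul_det_submatrix_succ_of_col_zero {k : ℕ}
    (A : Matrix (Fin (k + 1)) (Fin (k + 1)) R) (h : ∀ i : Fin k, A i.succ 0 = 0) :
    A.det = A 0 0 * (A.submatrix Fin.succ Fin.succ).det := by
  rw [det_succ_column_zero, Fin.sum_univ_succ]
  simp [h]

end Matrix

theorem Fin.val_cycleRange {n : ℕ} (i j : Fin n) :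
    (i.cycleRange j : ℕ) = if (j : ℕ) < i then (j : ℕ) + 1 else if j = i then 0 else j := by
  split_ifs with h₁ h₂
  · exact coe_cycleRange_of_lt h₁
  · rw [coe_cycleRange_of_le h₂.le, if_pos h₂]
  · rw [cycleRange_of_gt (lt_of_le_of_ne (not_lt.mp h₁) (Ne.symm h₂))]

section DerivativeDet

variable {n : Type*} [Fintype n] [DecidableEq n]

theorem Polynomial.derivative_det_eq_sum_updateCol (M : Matrix n n R[X]) :
    derivative M.det = ∑ j, (M.updateCol j fun i => derivative (M i j)).det := by
  simp only [det_apply, map_sum, Units.smul_def]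
  rw [Finset.sum_comm]
  refine Finset.sum_congr rfl fun σ _ => ?_
  rw [map_zsmul, derivative_prod_finset, Finset.smul_sum]
  refine Finset.sum_congr rfl fun j _ => ?_
  congr 1
  have hupd : (fun k => M.updateCol j (fun i => derivative (M i j)) (σ k) k)
      = Function.update (fun k => M (σ k) k) j (derivative (M (σ j) j)) := by
    ext1 k
    rcases eq_or_ne k j with rfl | hkj
    · simp
    · simp [hkj]
  rw [hupd, Finset.prod_update_of_mem (Finset.mem_univ j), mul_comm,
    Finset.sdiff_singleton_eq_erase]

theorem Polynomial.derivative_det (M : Matrix n n R[X]) :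
    derivative M.det = ∑ i, (M.updateRow i fun j => derivative (M i j)).det := by
  rw [← det_transpose, derivative_det_eq_sum_updateCol]
  simp [updateCol_transpose]

end DerivativeDet

theorem Polynomial.iterate_derivative_eq_zero_of_two_le {p : R[X]}
    (h : derivative (derivative p) = 0) {r : ℕ} (hr : 2 ≤ r) : derivative^[r] p = 0 := by
  obtain ⟨r, rfl⟩ := Nat.exists_eq_add_of_le' hr
  rw [Function.iterate_add_apply]
  exact (congrArg _ h).trans (iterate_map_zero derivative r)

theorem Polynomial.iterate_derivative_add_two_succ {N : ℕ} {ψ : Fin (N + 1) → R[X]}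
    (hrec : ∀ j : Fin N, derivative (derivative (ψ j.succ)) = ψ j.castSucc) (r : ℕ)
    (j : Fin N) : derivative^[r + 2] (ψ j.succ) = derivative^[r] (ψ j.castSucc) := by
  rw [Function.iterate_add_apply]
  exact congrArg _ (hrec j)

noncomputable section

def wronskianRow {N : ℕ} (ψ : Fin N → R[X]) (k : ℕ) : Fin N → R[X] :=
  fun j => derivative^[k] (ψ j)

def wronskianMatrix {N : ℕ} (ψ : Fin N → R[X]) : Matrix (Fin N) (Fin N) R[X] :=
  of fun i => wronskianRow ψ i

theorem wronskianMatrix_row {N : ℕ} (ψ : Fin N → R[X]) (i : Fin N) :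
    wronskianMatrix ψ i = wronskianRow ψ i :=
  rfl

theorem derivative_wronskianRow {N : ℕ} (ψ : Fin N → R[X]) (k : ℕ) :
    (fun j => derivative (wronskianRow ψ k j)) = wronskianRow ψ (k + 1) := by
  ext1 j
  exact (Function.iterate_succ_apply' _ _ _).symm

section LastRows

variable {k : ℕ} (ψ : Fin (k + 2) → R[X])

def wronskianLastRows (a b : ℕ) : R[X] :=
  (wronskianMatrix ψ).detUpdateRows (Fin.last k).castSucc (Fin.last (k + 1))
    (wronskianRow ψ a) (wronskianRow ψ b)

theorem wronskianLastRows_eq_det_updateRow (b : ℕ) :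
    wronskianLastRows ψ k b
      = ((wronskianMatrix ψ).updateRow (Fin.last (k + 1)) (wronskianRow ψ b)).det :=
  detUpdateRows_self_left _ _

theorem wronskianLastRows_self (a : ℕ) : wronskianLastRows ψ a a = 0 :=
  det_zero_of_row_eq (Fin.castSucc_lt_last (Fin.last k)).ne (by simp)

theorem wronskianLastRows_eq_det : wronskianLastRows ψ k (k + 1) = (wronskianMatrix ψ).det := by
  rw [wronskianLastRows_eq_det_updateRow]
  exact congrArg det (updateRow_eq_self _ _)

theorem derivative_wronskianLastRows (b : ℕ) :
    derivative (wronskianLastRows ψ k b)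
      = wronskianLastRows ψ (k + 1) b + wronskianLastRows ψ k (b + 1) := by
  have hpq : (Fin.last k).castSucc ≠ Fin.last (k + 1) := (Fin.castSucc_lt_last _).ne
  have hrow : ∀ i, i ≠ Fin.last (k + 1) →
      (wronskianMatrix ψ).updateRow (Fin.last (k + 1)) (wronskianRow ψ b) i = wronskianRow ψ i :=
    fun i hi => updateRow_ne hi
  rw [wronskianLastRows_eq_det_updateRow, derivative_det, Fintype.sum_eq_add _ _ hpq]
  · rw [hrow _ hpq, updateRow_self, derivative_wronskianRow, derivative_wronskianRow,
      updateRow_idem, wronskianLastRows_eq_det_updateRow, wronskianLastRows, detUpdateRows,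
      updateRow_comm _ hpq]
    rfl
  · -- differentiating row `i < k` duplicates row `i + 1`
    rintro i ⟨hip, hiq⟩
    have hik : (i : ℕ) < k := by
      have := i.isLt
      simp only [ne_eq, Fin.ext_iff, Fin.val_castSucc, Fin.val_last] at hip hiq
      omega
    set j : Fin (k + 2) := ⟨i + 1, by omega⟩
    have hjq : j ≠ Fin.last (k + 1) := by
      simp only [ne_eq, Fin.ext_iff, Fin.val_last, j]
      omega
    have hji : j ≠ i := by simp [j, Fin.ext_iff]
    refine det_zero_of_row_eq hji.symm ?_
    ext c
    simp [updateRow_apply, hji, hjq, hiq, wronskianMatrix, wronskianRow, j,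
      Function.iterate_succ_apply']

theorem derivative_det_wronskianMatrix :
    derivative (wronskianMatrix ψ).det = wronskianLastRows ψ k (k + 2) := by
  rw [← wronskianLastRows_eq_det, derivative_wronskianLastRows, wronskianLastRows_self, zero_add]

theorem derivative_derivative_det_wronskianMatrix :
    derivative (derivative (wronskianMatrix ψ).det)
      = wronskianLastRows ψ (k + 1) (k + 2) + wronskianLastRows ψ k (k + 3) := by
  rw [derivative_det_wronskianMatrix, derivative_wronskianLastRows]

end LastRows

section SmallerFamily

variable {k : ℕ}

theorem wronskianMatrix_detUpdateRows_single_last (ψ : Fin (k + 3) → R[X]) (a : ℕ) :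
    (wronskianMatrix ψ).detUpdateRows (Fin.last (k + 1)).castSucc (Fin.last (k + 2))
        (wronskianRow ψ a) (Pi.single (Fin.last (k + 2)) 1)
      = wronskianLastRows (fun j : Fin (k + 2) => ψ j.castSucc) k a := by
  rw [detUpdateRows, det_updateRow_last_single, wronskianLastRows_eq_det_updateRow]
  congr 1
  ext i j
  simp [updateRow_apply, wronskianMatrix, wronskianRow]

theorem wronskianMatrix_detUpdateRows_one_last {ψ : Fin (k + 3) → R[X]}
    (h0 : derivative (derivative (ψ 0)) = 0)
    (hrec : ∀ j : Fin (k + 2), derivative (derivative (ψ j.succ)) = ψ j.castSucc) (t s : ℕ) :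
    (wronskianMatrix ψ).detUpdateRows 1 (Fin.last (k + 2))
        (wronskianRow ψ (t + 2)) (wronskianRow ψ (s + 2))
      = (-1) ^ k * ψ 0 * wronskianLastRows (fun j : Fin (k + 2) => ψ j.castSucc) t s := by
  set A := ((wronskianMatrix ψ).updateRow 1 (wronskianRow ψ (t + 2))).updateRow
    (Fin.last (k + 2)) (wronskianRow ψ (s + 2))
  set ord : Fin (k + 3) → ℕ := fun i =>
    if i = Fin.last (k + 2) then s + 2 else if i = 1 then t + 2 else i
  have hA : ∀ i j, A i j = derivative^[ord i] (ψ j) := by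
    intro i j
    simp only [A, ord, updateRow_apply]
    split_ifs <;> rfl
  have hcol : ∀ i : Fin (k + 2), A i.succ 0 = 0 := by
    intro i
    rw [hA]
    refine iterate_derivative_eq_zero_of_two_le h0 ?_
    simp only [ord, Fin.ext_iff, Fin.val_succ, Fin.val_last, Fin.val_one]
    split_ifs <;> omega
  -- once row and column `0` are removed, the rows of `A` are those of the smaller Wronskian
  -- matrix, the row of order `t` being moved from position `k` to the front
  set σ := Fin.cycleRange (⟨k, by omega⟩ : Fin (k + 2))
  have hperm : ((wronskianMatrix fun j : Fin (k + 2) => ψ j.castSucc).updateRow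
        (Fin.last k).castSucc (wronskianRow (fun j : Fin (k + 2) => ψ j.castSucc) t)).updateRow
        (Fin.last (k + 1)) (wronskianRow (fun j : Fin (k + 2) => ψ j.castSucc) s)
      = (A.submatrix Fin.succ Fin.succ).submatrix σ id := by
    ext1 i j
    have hord : ord (σ i).succ = (if i = Fin.last (k + 1) then s
        else if i = (Fin.last k).castSucc then t else i) + 2 := by
      have := i.isLt
      simp only [ord, σ, Fin.ext_iff, Fin.val_succ, Fin.val_cycleRange, Fin.val_last,
        Fin.val_one, Fin.val_castSucc]
      split_ifs <;> omega
    rw [submatrix_apply, submatrix_apply, hA, hord, iterate_derivative_add_two_succ hrec]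
    simp only [updateRow_apply]
    split_ifs <;> rfl
  have hsq : ((-1 : R[X]) ^ k) * (-1) ^ k = 1 := by
    rw [← mul_pow, neg_one_mul, neg_neg, one_pow]
  rw [detUpdateRows, det_eq_mul_det_submatrix_succ_of_col_zero A hcol, hA, wronskianLastRows,
    detUpdateRows, hperm, det_permute, Fin.sign_cycleRange,
    show ord 0 = 0 by simp [ord, Fin.ext_iff], Function.iterate_zero_apply]
  push_cast
  linear_combination (-ψ 0 * (A.submatrix Fin.succ Fin.succ).det) * hsq

theorem wronskianLastRows_pluecker_init (ψ : Fin (k + 3) → R[X]) (a b c : ℕ) :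
    wronskianLastRows ψ a b * wronskianLastRows (fun j : Fin (k + 2) => ψ j.castSucc) k c
      - wronskianLastRows ψ a c * wronskianLastRows (fun j : Fin (k + 2) => ψ j.castSucc) k b
      + wronskianLastRows (fun j : Fin (k + 2) => ψ j.castSucc) k a * wronskianLastRows ψ b c
      = 0 := by
  have h := detUpdateRows_pluecker (wronskianMatrix ψ)
    (Fin.castSucc_lt_last (Fin.last (k + 1))).ne (wronskianRow ψ a) (wronskianRow ψ b)
    (wronskianRow ψ c) (Pi.single (Fin.last (k + 2)) 1)
  simp only [wronskianMatrix_detUpdateRows_single_last] at h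
  exact h

theorem wronskianLastRows_pluecker_shift [IsDomain R] {ψ : Fin (k + 3) → R[X]}
    (h0 : derivative (derivative (ψ 0)) = 0)
    (hrec : ∀ j : Fin (k + 2), derivative (derivative (ψ j.succ)) = ψ j.castSucc)
    (hne : ψ 0 ≠ 0) (t u w : ℕ) :
    wronskianLastRows ψ (k + 1) (t + 2)
        * wronskianLastRows (fun j : Fin (k + 2) => ψ j.castSucc) u w
      - wronskianLastRows ψ (k + 1) (u + 2)
        * wronskianLastRows (fun j : Fin (k + 2) => ψ j.castSucc) t w
      + wronskianLastRows ψ (k + 1) (w + 2)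
        * wronskianLastRows (fun j : Fin (k + 2) => ψ j.castSucc) t u = 0 := by
  have hone : ∀ y, (wronskianMatrix ψ).detUpdateRows 1 (Fin.last (k + 2)) (wronskianRow ψ 1)
      (wronskianRow ψ y) = wronskianLastRows ψ (k + 1) y := fun y => by
    rw [show wronskianRow ψ 1 = wronskianMatrix ψ 1 by rw [wronskianMatrix_row, Fin.val_one],
      detUpdateRows_self_left, wronskianLastRows_eq_det_updateRow]
  have h := detUpdateRows_pluecker (wronskianMatrix ψ) (p := 1) (q := Fin.last (k + 2))
    (by simp [Fin.ext_iff]) (wronskianRow ψ 1) (wronskianRow ψ (t + 2))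
    (wronskianRow ψ (u + 2)) (wronskianRow ψ (w + 2))
  simp only [hone, wronskianMatrix_detUpdateRows_one_last h0 hrec] at h
  have hfactor : ((-1) ^ k * ψ 0 : R[X]) ≠ 0 :=
    mul_ne_zero (pow_ne_zero _ (neg_ne_zero.mpr one_ne_zero)) hne
  refine (mul_eq_zero.mp ?_).resolve_left hfactor
  linear_combination h

end SmallerFamily

def hirotaD2 (f g : R[X]) : R[X] :=
  derivative (derivative f) * g - 2 * derivative f * derivative g + f * derivative (derivative g)

theorem hirotaD2_det_wronskianMatrix [IsDomain R] {k : ℕ} {ψ : Fin (k + 3) → R[X]}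
    (h0 : derivative (derivative (ψ 0)) = 0)
    (hrec : ∀ j : Fin (k + 2), derivative (derivative (ψ j.succ)) = ψ j.castSucc)
    (hne : ψ 0 ≠ 0) :
    hirotaD2 (wronskianMatrix ψ).det (wronskianMatrix fun j : Fin (k + 2) => ψ j.castSucc).det
      = 0 := by
  rw [hirotaD2, derivative_derivative_det_wronskianMatrix, derivative_det_wronskianMatrix,
    derivative_derivative_det_wronskianMatrix, derivative_det_wronskianMatrix,
    ← wronskianLastRows_eq_det, ← wronskianLastRows_eq_det]
  linear_combination wronskianLastRows_pluecker_init ψ (k + 1) (k + 2) (k + 3)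
    + wronskianLastRows_pluecker_shift h0 hrec hne k (k + 1) (k + 2)

theorem hirotaD2_det_wronskianMatrix_fin_two {ψ : Fin 2 → R[X]}
    (h0 : derivative (derivative (ψ 0)) = 0) (h1 : derivative (derivative (ψ 1)) = ψ 0) :
    hirotaD2 (wronskianMatrix ψ).det (wronskianMatrix fun j : Fin 1 => ψ j.castSucc).det = 0 := by
  have hW : (wronskianMatrix ψ).det = ψ 0 * derivative (ψ 1) - ψ 1 * derivative (ψ 0) := by
    simp [det_fin_two, wronskianMatrix, wronskianRow]
  have hV : (wronskianMatrix fun j : Fin 1 => ψ j.castSucc).det = ψ 0 := by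
    simp [wronskianMatrix, wronskianRow]
  rw [hirotaD2, hW, hV]
  simp only [derivative_mul, derivative_sub, derivative_add, h0, h1, derivative_zero]
  ring

end

/-- **Adler–Moser Wronskians solve Tkachenko's bilinear equation.**
If `ψ 0, …, ψ n` (representing `ψ_1, …, ψ_{n+1}`) are polynomials with `ψ_1'' = 0`,
`ψ_1 ≠ 0` and `ψ_k'' = ψ_{k-1}`, then the consecutive Wronskians
`Θ_n = W(ψ_1, …, ψ_n)` and `Θ_{n+1} = W(ψ_1, …, ψ_{n+1})` satisfy
`Θ_{n+1}'' Θ_n − 2 Θ_{n+1}' Θ_n' + Θ_{n+1} Θ_n'' = 0` identically.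
In particular the Adler–Moser polynomials solve this equation. -/
theorem adlerMoser_bilinear (n : ℕ) (ψ : Fin (n + 1) → Polynomial ℂ)
    (h1 : Polynomial.derivative (Polynomial.derivative (ψ 0)) = 0)
    (hne : ψ 0 ≠ 0)
    (hrec : ∀ k : Fin n,
      Polynomial.derivative (Polynomial.derivative (ψ k.succ)) = ψ k.castSucc)
    (Θn Θn1 : Polynomial ℂ)
    (hΘn : Θn = wronskian (fun i : Fin n => ψ i.castSucc))
    (hΘn1 : Θn1 = wronskian ψ) :
    Polynomial.derivative (Polynomial.derivative Θn1) * Θn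
      - 2 * Polynomial.derivative Θn1 * Polynomial.derivative Θn
      + Θn1 * Polynomial.derivative (Polynomial.derivative Θn) = 0 := by
  subst hΘn hΘn1
  change hirotaD2 (wronskianMatrix ψ).det (wronskianMatrix fun i : Fin n => ψ i.castSucc).det = 0
  rcases n with _ | _ | m
  · simp [hirotaD2, wronskianMatrix, wronskianRow, h1]
  · exact hirotaD2_det_wronskianMatrix_fin_two h1 (hrec 0)
  · exact hirotaD2_det_wronskianMatrix h1 hrec hne
end

section
/- Suppose P and Q are nonzero complex polynomials, of degrees j and k respectively, satisfying the bilinear equation P''Q − 2P'Q' + PQ'' = 0 identically. Then (j − k)² = j + k; equivalently, there exists an integer d (namely d = j − k) such that j = d(d+1)/2 and k = d(d−1)/2, so the degrees of P and Q are two successive triangular numbers. -/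
/-!
Comparing coefficients of `z^(j+k-2)`: the terms `P''Q`, `P'Q'`, `PQ''` contribute
`j(j-1)`, `jk`, `k(k-1)` times the product of the leading coefficients, so the equation forces
`j(j-1) - 2jk + k(k-1) = (j-k)^2 - (j+k)` to vanish. The triangular form is then algebra in `d = j-k`.
For small degrees the index `j+k-2` truncates in `ℕ`, but then every contribution is zero
on both sides, so the coefficient formulas hold without case distinctions.
-/

namespace Polynomial

variable {R : Type*} [CommRing R]

theorem coeff_derivative_derivative_mul_natDegree_add_sub_two (p q : R[X]) :
    (derivative (derivative p) * q).coeff (p.natDegree + q.natDegree - 2) =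
      p.natDegree * (p.natDegree - 1 : R) * (p.leadingCoeff * q.leadingCoeff) := by
  rcases le_or_gt p.natDegree 1 with hp | hp
  · have hp' : (derivative p).natDegree = 0 := by
      have := natDegree_derivative_le p
      omega
    rw [derivative_of_natDegree_zero hp', zero_mul, coeff_zero]
    interval_cases p.natDegree <;> simp
  · obtain ⟨n, hn⟩ : ∃ n, p.natDegree = n + 2 := ⟨p.natDegree - 2, by omega⟩
    have hp'' : (derivative (derivative p)).natDegree ≤ n := by
      have := natDegree_iterate_derivative p 2
      simp_all
    rw [hn, show n + 2 + q.natDegree - 2 = n + q.natDegree by omega,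
      coeff_mul_add_eq_of_natDegree_le hp'' le_rfl, coeff_derivative, coeff_derivative,
      leadingCoeff, leadingCoeff, hn]
    push_cast
    ring

theorem coeff_derivative_mul_derivative_natDegree_add_sub_two (p q : R[X]) :
    (derivative p * derivative q).coeff (p.natDegree + q.natDegree - 2) =
      p.natDegree * q.natDegree * (p.leadingCoeff * q.leadingCoeff) := by
  rcases Nat.eq_zero_or_pos p.natDegree with hp | hp
  · simp [derivative_of_natDegree_zero hp, hp]
  rcases Nat.eq_zero_or_pos q.natDegree with hq | hq
  · simp [derivative_of_natDegree_zero hq, hq]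
  obtain ⟨m, hm⟩ : ∃ m, p.natDegree = m + 1 := ⟨p.natDegree - 1, by omega⟩
  obtain ⟨n, hn⟩ : ∃ n, q.natDegree = n + 1 := ⟨q.natDegree - 1, by omega⟩
  have hp' : (derivative p).natDegree ≤ m := by simpa [hm] using natDegree_derivative_le p
  have hq' : (derivative q).natDegree ≤ n := by simpa [hn] using natDegree_derivative_le q
  rw [hm, hn, show m + 1 + (n + 1) - 2 = m + n by omega,
    coeff_mul_add_eq_of_natDegree_le hp' hq', coeff_derivative, coeff_derivative,
    leadingCoeff, leadingCoeff, hm, hn]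
  push_cast
  ring

theorem coeff_bilinear_natDegree_add_sub_two (p q : R[X]) :
    (derivative (derivative p) * q - 2 * derivative p * derivative q +
        p * derivative (derivative q)).coeff (p.natDegree + q.natDegree - 2) =
      (((p.natDegree : R) - q.natDegree) ^ 2 - (p.natDegree + q.natDegree)) *
        (p.leadingCoeff * q.leadingCoeff) := by
  rw [coeff_add, coeff_sub, mul_assoc, coeff_ofNat_mul, mul_comm p,
    coeff_derivative_derivative_mul_natDegree_add_sub_two,
    coeff_derivative_mul_derivative_natDegree_add_sub_two, add_comm p.natDegree,
    coeff_derivative_derivative_mul_natDegree_add_sub_two]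
  ring

theorem natDegree_sub_sq_eq_add_of_bilinear_eq_zero [IsDomain R] [CharZero R] {p q : R[X]}
    (hp : p ≠ 0) (hq : q ≠ 0)
    (h : derivative (derivative p) * q - 2 * derivative p * derivative q +
      p * derivative (derivative q) = 0) :
    ((p.natDegree : ℤ) - q.natDegree) ^ 2 = p.natDegree + q.natDegree := by
  have hc := congrArg (coeff · (p.natDegree + q.natDegree - 2)) h
  simp only [coeff_bilinear_natDegree_add_sub_two, coeff_zero, mul_eq_zero,
    leadingCoeff_eq_zero, hp, hq, or_false, sub_eq_zero] at hc
  exact_mod_cast hc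

end Polynomial

/-- **Degrees of stationary vortex polynomials are successive triangular numbers.**
If nonzero polynomials `P`, `Q` of degrees `j`, `k` satisfy
`P''Q − 2P'Q' + PQ'' = 0` identically, then `(j − k)² = j + k`; equivalently, with
`d = j − k`, one has `j = d(d+1)/2` and `k = d(d−1)/2`. -/
theorem bilinear_degrees_triangular (P Q : Polynomial ℂ) (hP : P ≠ 0) (hQ : Q ≠ 0)
    (h : Polynomial.derivative (Polynomial.derivative P) * Q
        - 2 * Polynomial.derivative P * Polynomial.derivative Q
        + P * Polynomial.derivative (Polynomial.derivative Q) = 0) :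
    ((P.natDegree : ℤ) - (Q.natDegree : ℤ)) ^ 2 = (P.natDegree : ℤ) + (Q.natDegree : ℤ) ∧
    ∃ d : ℤ, d = (P.natDegree : ℤ) - (Q.natDegree : ℤ) ∧
      2 * (P.natDegree : ℤ) = d * (d + 1) ∧ 2 * (Q.natDegree : ℤ) = d * (d - 1) := by
  have key := Polynomial.natDegree_sub_sq_eq_add_of_bilinear_eq_zero hP hQ h
  exact ⟨key, _, rfl, by linear_combination -key, by linear_combination -key⟩
end

section
/- Let z_1, …, z_m, ζ_1, …, ζ_n be m + n pairwise distinct complex numbers such that ∑_{k ≠ j} 1/(z_j − z_k) = ∑_{ℓ=1}^{n} 1/(z_j − ζ_ℓ) for every j = 1, …, m, and ∑_{ℓ ≠ j} 1/(ζ_j − ζ_ℓ) = ∑_{k=1}^{m} 1/(ζ_j − z_k) for every j = 1, …, n (the stationarity equations for m positive and n negative unit vortices). Then the polynomials P(z) = ∏_{j=1}^{m}(z − z_j) and Q(z) = ∏_{ℓ=1}^{n}(z − ζ_ℓ) satisfy P''Q − 2P'Q' + PQ'' = 0 identically. -/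
open Polynomial

/-! At a vortex `z_j`, write `P = (X - z_j) R`. Then `P''Q - 2P'Q' + PQ''` evaluates to
`2 (R'Q - RQ')(z_j)`, and since `R'/R` and `Q'/Q` at `z_j` are the two sides of the `j`-th
stationarity equation, this vanishes; symmetrically at every `ζ_l`. So the polynomial, whose degree
is below `m + n`, has `m + n` distinct roots. -/

section CommRing

variable {R : Type*} [CommRing R]

/-- Hirota's bilinear derivative `D_z² P·Q`. -/
noncomputable def bilinearD2 (P Q : R[X]) : R[X] :=
  derivative (derivative P) * Q - 2 * derivative P * derivative Q + P * derivative (derivative Q)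

theorem bilinearD2_comm (P Q : R[X]) : bilinearD2 P Q = bilinearD2 Q P := by
  unfold bilinearD2
  ring

theorem degree_bilinearD2_lt {P Q : R[X]} (hP : P ≠ 0) (hQ : Q ≠ 0) :
    (bilinearD2 P Q).degree < P.degree + Q.degree := by
  have hP' := degree_derivative_lt hP
  have hQ' := degree_derivative_lt hQ
  have hP'' := degree_derivative_le.trans_lt hP'
  have hQ'' := degree_derivative_le.trans_lt hQ'
  have hPQ' : (derivative P).degree + (derivative Q).degree < P.degree + Q.degree :=
    (add_le_add le_rfl hQ'.le).trans_lt (WithBot.add_lt_add_right (degree_ne_bot.mpr hQ) hP')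
  have hTwo : (2 * derivative P * derivative Q).degree ≤
      (derivative P).degree + (derivative Q).degree := by
    have h2 : (2 : R[X]).degree ≤ 0 :=
      natDegree_eq_zero_iff_degree_le_zero.mp (natDegree_ofNat 2)
    calc _ ≤ (2 : R[X]).degree + (derivative P).degree + (derivative Q).degree :=
          (degree_mul_le _ _).trans (add_le_add (degree_mul_le _ _) le_rfl)
      _ ≤ _ := by grw [h2, zero_add]
  refine (degree_add_le _ _).trans_lt (max_lt ((degree_sub_le _ _).trans_lt (max_lt ?_ ?_)) ?_)
  · exact (degree_mul_le _ _).trans_lt (WithBot.add_lt_add_right (degree_ne_bot.mpr hQ) hP'')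
  · exact hTwo.trans_lt hPQ'
  · exact (degree_mul_le _ _).trans_lt (WithBot.add_lt_add_left (degree_ne_bot.mpr hP) hQ'')

theorem eval_bilinearD2_X_sub_C_mul (a : R) (P Q : R[X]) :
    eval a (bilinearD2 ((X - C a) * P) Q) =
      2 * (eval a (derivative P) * eval a Q - eval a P * eval a (derivative Q)) := by
  simp only [bilinearD2, derivative_mul, derivative_sub, derivative_X, derivative_C, sub_zero,
    one_mul, derivative_add, eval_add, eval_sub, eval_mul, eval_X, eval_C, sub_self, zero_mul,
    add_zero, eval_ofNat]
  ring

theorem degree_prod_X_sub_C [Nontrivial R] {ι : Type*} (s : Finset ι) (f : ι → R) :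
    (∏ i ∈ s, (X - C (f i))).degree = (s.card : WithBot ℕ) := by
  rw [degree_eq_natDegree (monic_prod_of_monic _ _ fun i _ => monic_X_sub_C (f i)).ne_zero,
    natDegree_finsetProd_X_sub_C_eq_card]

end CommRing

section Field

variable {K : Type*} [Field K]

theorem eval_derivative_prod_X_sub_C {ι : Type*} (s : Finset ι) (f : ι → K) {a : K}
    (ha : ∀ i ∈ s, a ≠ f i) :
    eval a (derivative (∏ i ∈ s, (X - C (f i)))) =
      (∑ i ∈ s, 1 / (a - f i)) * eval a (∏ i ∈ s, (X - C (f i))) := by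
  induction s using Finset.cons_induction with
  | empty => simp
  | cons b s _ ih =>
    have hab : a - f b ≠ 0 := sub_ne_zero.mpr (ha b (Finset.mem_cons_self b s))
    rw [Finset.prod_cons, Finset.sum_cons, derivative_mul, eval_add, eval_mul, eval_mul,
      eval_mul, ih fun i hi => ha i (Finset.mem_cons_of_mem hi)]
    simp only [derivative_sub, derivative_X, derivative_C, sub_zero, eval_one, eval_sub, eval_X,
      eval_C]
    field_simp

theorem eval_bilinearD2_prod_X_sub_C_eq_zero {ι κ : Type*} [Fintype ι] [DecidableEq ι]
    [Fintype κ] {f : ι → K} {g : κ → K} (hf : Function.Injective f) {j : ι}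
    (hfg : ∀ k, f j ≠ g k)
    (hj : ∑ i ∈ Finset.univ.erase j, 1 / (f j - f i) = ∑ k, 1 / (f j - g k)) :
    eval (f j) (bilinearD2 (∏ i, (X - C (f i))) (∏ k, (X - C (g k)))) = 0 := by
  rw [← Finset.mul_prod_erase Finset.univ (fun i => X - C (f i)) (Finset.mem_univ j),
    eval_bilinearD2_X_sub_C_mul,
    eval_derivative_prod_X_sub_C _ _ fun i hi => hf.ne (Finset.ne_of_mem_erase hi).symm,
    eval_derivative_prod_X_sub_C _ _ fun k _ => hfg k, hj]
  ring

end Field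

/-- **Stationary vortex configurations satisfy the bilinear equation.**
If `z_1, …, z_m, ζ_1, …, ζ_n` are pairwise distinct and satisfy the stationarity
equations for `m` positive and `n` negative unit vortices, then
`P = ∏ (z − z_j)`, `Q = ∏ (z − ζ_ℓ)` satisfy `P''Q − 2P'Q' + PQ'' = 0`. -/
theorem stationary_vortices_bilinear (m n : ℕ) (z : Fin m → ℂ) (ζ : Fin n → ℂ)
    (hz : Function.Injective z) (hζ : Function.Injective ζ)
    (hzζ : ∀ (j : Fin m) (k : Fin n), z j ≠ ζ k)
    (h1 : ∀ j : Fin m,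
      ∑ k ∈ Finset.univ.erase j, 1 / (z j - z k) = ∑ l : Fin n, 1 / (z j - ζ l))
    (h2 : ∀ j : Fin n,
      ∑ l ∈ Finset.univ.erase j, 1 / (ζ j - ζ l) = ∑ k : Fin m, 1 / (ζ j - z k))
    (P Q : Polynomial ℂ)
    (hP : P = ∏ j : Fin m, (Polynomial.X - Polynomial.C (z j)))
    (hQ : Q = ∏ l : Fin n, (Polynomial.X - Polynomial.C (ζ l))) :
    Polynomial.derivative (Polynomial.derivative P) * Q
      - 2 * Polynomial.derivative P * Polynomial.derivative Q
      + P * Polynomial.derivative (Polynomial.derivative Q) = 0 := by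
  change bilinearD2 P Q = 0
  have hP0 : P ≠ 0 := hP ▸ Finset.prod_ne_zero_iff.mpr fun j _ => X_sub_C_ne_zero (z j)
  have hQ0 : Q ≠ 0 := hQ ▸ Finset.prod_ne_zero_iff.mpr fun l _ => X_sub_C_ne_zero (ζ l)
  have hdeg : (bilinearD2 P Q).degree < (Finset.univ : Finset (Fin m ⊕ Fin n)).card := by
    simpa [hP, hQ, degree_prod_X_sub_C] using degree_bilinearD2_lt hP0 hQ0
  refine eq_zero_of_degree_lt_of_eval_index_eq_zero (v := Sum.elim z ζ) _
    (hz.sumElim hζ hzζ).injOn hdeg ?_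
  subst hP hQ
  rintro (j | l) -
  · exact eval_bilinearD2_prod_X_sub_C_eq_zero hz (hzζ j) (h1 j)
  · rw [bilinearD2_comm]
    exact eval_bilinearD2_prod_X_sub_C_eq_zero hζ (fun k => (hzζ k l).symm) (h2 l)
end

section
/- Let μ ∈ ℂ and let z_1, …, z_m, ζ_1, …, ζ_n be m + n pairwise distinct complex numbers such that ∑_{k ≠ j} 1/(z_j − z_k) = −μ + ∑_{ℓ=1}^{n} 1/(z_j − ζ_ℓ) for every j = 1, …, m, and ∑_{ℓ ≠ j} 1/(ζ_j − ζ_ℓ) = μ + ∑_{k=1}^{m} 1/(ζ_j − z_k) for every j = 1, …, n (the equations for a uniformly translating configuration of m positive and n negative unit vortices). Then the polynomials P(z) = ∏_{j=1}^{m}(z − z_j) and Q(z) = ∏_{ℓ=1}^{n}(z − ζ_ℓ) satisfy P''Q − 2P'Q' + PQ'' + 2μ(P'Q − PQ') = 0 identically. -/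
/-!
Write `F(μ; P, Q) = P''Q - 2P'Q' + PQ'' + 2μ(P'Q - PQ')`. Every term contains a derivative, so
`deg F < m + n`, and it suffices to show that `F` vanishes at the `m + n` distinct points
`z_j, ζ_l`. At `z_j` write `P = (X - z_j) R`; then `P(z_j) = 0`, `P'(z_j) = R(z_j)`,
`P''(z_j) = 2R'(z_j)`, and `F(z_j) = 2RQ (R'/R - Q'/Q + μ)(z_j)`, which vanishes because the
logarithmic derivatives `R'/R` and `Q'/Q` at `z_j` are exactly the two sums in the equilibrium
equation. The points `ζ_l` are handled by the symmetry `F(μ; Q, P) = F(-μ; P, Q)`.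
-/

open Polynomial Finset Lagrange

noncomputable def vortexBilinear {R : Type*} [CommRing R] (μ : R) (P Q : R[X]) : R[X] :=
  derivative (derivative P) * Q - 2 * derivative P * derivative Q + P * derivative (derivative Q)
    + C (2 * μ) * (derivative P * Q - P * derivative Q)

section CommRing

variable {R : Type*} [CommRing R]

theorem vortexBilinear_swap (μ : R) (P Q : R[X]) :
    vortexBilinear μ Q P = vortexBilinear (-μ) P Q := by
  simp only [vortexBilinear, mul_neg, C_neg]
  ring

theorem eval_vortexBilinear_X_sub_C_mul (μ a : R) (P Q : R[X]) :
    eval a (vortexBilinear μ ((X - C a) * P) Q) =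
      2 * (eval a (derivative P) * eval a Q - eval a P * eval a (derivative Q)
        + μ * eval a P * eval a Q) := by
  simp only [vortexBilinear, derivative_mul, derivative_add, derivative_sub, derivative_X,
    derivative_C, derivative_zero, derivative_one, eval_add, eval_sub, eval_mul, eval_X, eval_C,
    eval_zero, eval_one, eval_ofNat]
  ring

theorem mul_mem_degreeLT_add {p q : R[X]} {m n : ℕ} (hp : p.degree < m) (hq : q.degree ≤ n) :
    p * q ∈ degreeLT R (m + n) := mem_degreeLT.mpr <|
  calc (p * q).degree ≤ p.degree + n := (degree_mul_le p q).trans (by gcongr)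
    _ < ↑(m + n) := by
      push_cast
      exact WithBot.add_lt_add_right (WithBot.natCast_ne_bot n) hp

theorem degree_vortexBilinear_lt (μ : R) {P Q : R[X]} (hP : P ≠ 0) (hQ : Q ≠ 0) :
    (vortexBilinear μ P Q).degree < ↑(P.natDegree + Q.natDegree) := by
  have hP' : (derivative P).degree < P.natDegree :=
    degree_eq_natDegree hP ▸ degree_derivative_lt hP
  have hQ' : (derivative Q).degree < Q.natDegree :=
    degree_eq_natDegree hQ ▸ degree_derivative_lt hQ
  have hP'' := degree_derivative_le.trans_lt hP'
  have hQ'' := degree_derivative_le.trans_lt hQ'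
  have hQ_le : Q.degree ≤ Q.natDegree := degree_le_natDegree
  rw [← mem_degreeLT]
  unfold vortexBilinear
  refine add_mem (add_mem (sub_mem (mul_mem_degreeLT_add hP'' hQ_le) ?_) ?_) ?_
  · rw [two_mul, add_mul]
    exact add_mem (mul_mem_degreeLT_add hP' hQ'.le) (mul_mem_degreeLT_add hP' hQ'.le)
  · rw [mul_comm, add_comm]
    exact mul_mem_degreeLT_add hQ'' degree_le_natDegree
  · rw [C_mul']
    refine Submodule.smul_mem _ _ (sub_mem (mul_mem_degreeLT_add hP' hQ_le) ?_)
    rw [mul_comm, add_comm]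
    exact mul_mem_degreeLT_add hQ' degree_le_natDegree

end CommRing

section Field

variable {K ι : Type*} [Field K]

theorem eval_derivative_nodal_of_forall_ne (s : Finset ι) (v : ι → K) {x : K}
    (hx : ∀ i ∈ s, x ≠ v i) :
    eval x (derivative (nodal s v)) = eval x (nodal s v) * ∑ i ∈ s, (x - v i)⁻¹ := by
  classical
  rw [derivative_nodal, eval_finsetSum, mul_sum]
  refine sum_congr rfl fun i hi => ?_
  rw [eval_nodal, eval_nodal, ← mul_prod_erase s _ hi, mul_comm (x - v i), mul_assoc,
    mul_inv_cancel₀ (sub_ne_zero.mpr (hx i hi)), mul_one]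

theorem eval_vortexBilinear_nodal_at_node {κ : Type*} [Fintype ι] [Fintype κ] [DecidableEq ι]
    (μ : K) {a : ι → K} {b : κ → K} (ha : Function.Injective a) (hab : ∀ i l, a i ≠ b l)
    (j : ι) (h : ∑ k ∈ univ.erase j, (a j - a k)⁻¹ = -μ + ∑ l, (a j - b l)⁻¹) :
    eval (a j) (vortexBilinear μ (nodal univ a) (nodal univ b)) = 0 := by
  have hR := eval_derivative_nodal_of_forall_ne (univ.erase j) a (x := a j)
    fun k hk => ha.ne (mem_erase.mp hk).1.symm
  have hQ := eval_derivative_nodal_of_forall_ne univ b (x := a j) fun l _ => hab j l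
  rw [nodal_eq_mul_nodal_erase (mem_univ j), eval_vortexBilinear_X_sub_C_mul, hR, hQ]
  linear_combination (2 * eval (a j) (nodal (univ.erase j) a) * eval (a j) (nodal univ b)) * h

end Field

/-- **Uniformly translating vortex configurations satisfy the bilinear equation.**
If `z_1, …, z_m, ζ_1, …, ζ_n` are pairwise distinct and satisfy the translating
equilibrium equations with velocity parameter `μ`, then `P = ∏ (z − z_j)`,
`Q = ∏ (z − ζ_ℓ)` satisfy `P''Q − 2P'Q' + PQ'' + 2μ(P'Q − PQ') = 0`. -/
theorem translating_vortices_bilinear (μ : ℂ) (m n : ℕ) (z : Fin m → ℂ) (ζ : Fin n → ℂ)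
    (hz : Function.Injective z) (hζ : Function.Injective ζ)
    (hzζ : ∀ (j : Fin m) (k : Fin n), z j ≠ ζ k)
    (h1 : ∀ j : Fin m,
      ∑ k ∈ Finset.univ.erase j, 1 / (z j - z k) = -μ + ∑ l : Fin n, 1 / (z j - ζ l))
    (h2 : ∀ j : Fin n,
      ∑ l ∈ Finset.univ.erase j, 1 / (ζ j - ζ l) = μ + ∑ k : Fin m, 1 / (ζ j - z k))
    (P Q : Polynomial ℂ)
    (hP : P = ∏ j : Fin m, (Polynomial.X - Polynomial.C (z j)))
    (hQ : Q = ∏ l : Fin n, (Polynomial.X - Polynomial.C (ζ l))) :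
    Polynomial.derivative (Polynomial.derivative P) * Q
      - 2 * Polynomial.derivative P * Polynomial.derivative Q
      + P * Polynomial.derivative (Polynomial.derivative Q)
      + Polynomial.C (2 * μ) * (Polynomial.derivative P * Q - P * Polynomial.derivative Q)
      = 0 := by
  subst hP hQ
  simp only [← nodal_eq]
  change vortexBilinear μ (nodal univ z) (nodal univ ζ) = 0
  refine eq_zero_of_degree_lt_of_eval_index_eq_zero (v := Sum.elim z ζ) univ
    (hz.sumElim hζ hzζ).injOn ?_ ?_
  · simpa [natDegree_nodal] using degree_vortexBilinear_lt μ
      (nodal_ne_zero (s := univ) (v := z)) (nodal_ne_zero (s := univ) (v := ζ))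
  · rintro (j | j) -
    · exact eval_vortexBilinear_nodal_at_node μ hz hzζ j (by simpa only [one_div] using h1 j)
    · rw [Sum.elim_inr, vortexBilinear_swap]
      exact eval_vortexBilinear_nodal_at_node (-μ) hζ (fun l k => (hzζ k l).symm) j
        (by simpa only [one_div, neg_neg] using h2 j)
end

section
/- Let P and Q be complex polynomials and μ ∈ ℂ. Then for every z ∈ ℂ with Q(z) ≠ 0, the function ψ(z) = (P(z)/Q(z)) e^{μz} and the potential u = −2 (Q''Q − (Q')²)/Q² satisfy −ψ''(z) + u(z) ψ(z) + μ² ψ(z) = −(e^{μz}/Q(z)²) · (P''Q − 2P'Q' + PQ'' + 2μ(P'Q − PQ'))(z). In particular, if P''Q − 2P'Q' + PQ'' + 2μ(P'Q − PQ') = 0 identically, then ψ is an eigenstate of the Schrödinger operator −d²/dz² + u with eigenvalue −μ² on the set where Q ≠ 0. -/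
/-!
Writing `ψ = f e^{μz}` with `f = P/Q`, one has `ψ'' = (f'' + 2μ f' + μ² f) e^{μz}`, so the left side
is `-(f'' - u f + 2μ f') e^{μz}`. Two applications of the quotient rule give
`f' = (P'Q - PQ')/Q²` and `f'' - u f = (P''Q - 2P'Q' + PQ'')/Q²`, which is the claim.
-/

open Polynomial Filter Topology

section ExpTwist

variable {f : ℂ → ℂ} {f' z : ℂ} (μ : ℂ)

theorem HasDerivAt.mul_cexp_const_mul (hf : HasDerivAt f f' z) :
    HasDerivAt (fun w => f w * Complex.exp (μ * w)) ((f' + μ * f z) * Complex.exp (μ * z)) z := by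
  have hexp : HasDerivAt (fun w => Complex.exp (μ * w)) (Complex.exp (μ * z) * μ) z :=
    ((hasDerivAt_id z).const_mul μ).cexp.congr_deriv (by simp)
  exact (hf.mul hexp).congr_deriv (by ring)

theorem deriv_deriv_mul_cexp_const_mul {U : Set ℂ} (hU : IsOpen U) (hf : DifferentiableOn ℂ f U)
    (hz : z ∈ U) :
    deriv (deriv fun w => f w * Complex.exp (μ * w)) z
      = (deriv (deriv f) z + 2 * μ * deriv f z + μ ^ 2 * f z) * Complex.exp (μ * z) := by
  have hdiff : ∀ w ∈ U, DifferentiableAt ℂ f w := fun w hw =>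
    (hf w hw).differentiableAt (hU.mem_nhds hw)
  have hderiv : deriv (fun w => f w * Complex.exp (μ * w))
      =ᶠ[𝓝 z] fun w => (deriv f w + μ * f w) * Complex.exp (μ * w) :=
    eventually_of_mem (hU.mem_nhds hz) fun w hw =>
      ((hdiff w hw).hasDerivAt.mul_cexp_const_mul μ).deriv
  have hf'' : HasDerivAt (fun w => deriv f w + μ * f w)
      (deriv (deriv f) z + μ * deriv f z) z :=
    (((hf.deriv hU) z hz).differentiableAt (hU.mem_nhds hz)).hasDerivAt.add
      ((hdiff z hz).hasDerivAt.const_mul μ)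
  rw [hderiv.deriv_eq, (hf''.mul_cexp_const_mul μ).deriv]
  ring

end ExpTwist

section RationalFunction

variable (P Q : ℂ[X]) {z : ℂ}

theorem Polynomial.hasDerivAt_eval_div_eval (hz : Q.eval z ≠ 0) :
    HasDerivAt (fun w => P.eval w / Q.eval w)
      ((derivative P * Q - P * derivative Q).eval z / (Q ^ 2).eval z) z :=
  ((P.hasDerivAt z).div (Q.hasDerivAt z) hz).congr_deriv (by simp)

theorem Polynomial.differentiableOn_eval_div_eval :
    DifferentiableOn ℂ (fun w => P.eval w / Q.eval w) {w | Q.eval w ≠ 0} := fun _ hw =>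
  (P.hasDerivAt_eval_div_eval Q hw).differentiableAt.differentiableWithinAt

theorem Polynomial.isOpen_setOf_eval_ne_zero : IsOpen {w : ℂ | Q.eval w ≠ 0} :=
  isOpen_ne.preimage Q.continuous

theorem Polynomial.deriv_deriv_eval_div_eval (hz : Q.eval z ≠ 0) :
    deriv (deriv fun w => P.eval w / Q.eval w) z
      = ((derivative (derivative P) * Q - P * derivative (derivative Q)) * Q
          - 2 * derivative Q * (derivative P * Q - P * derivative Q)).eval z / Q.eval z ^ 3 := by
  have hderiv : deriv (fun w => P.eval w / Q.eval w)
      =ᶠ[𝓝 z] fun w => (derivative P * Q - P * derivative Q).eval w / (Q ^ 2).eval w :=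
    eventually_of_mem ((Q.isOpen_setOf_eval_ne_zero).mem_nhds hz) fun w hw =>
      (P.hasDerivAt_eval_div_eval Q hw).deriv
  have hQ2 : (Q ^ 2).eval z ≠ 0 := by simpa using hz
  rw [hderiv.deriv_eq, ((derivative P * Q - P * derivative Q).hasDerivAt_eval_div_eval _ hQ2).deriv]
  simp only [derivative_mul, derivative_sub, derivative_pow, eval_mul, eval_sub, eval_add,
    eval_pow, eval_C, eval_ofNat]
  field_simp
  ring

end RationalFunction

theorem schroedinger_eval_div_mul_cexp (P Q : ℂ[X]) (μ : ℂ) {z : ℂ} (hz : Q.eval z ≠ 0) :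
    - deriv (deriv (fun w : ℂ => P.eval w / Q.eval w * Complex.exp (μ * w))) z
        + (-2 * ((derivative (derivative Q) * Q - (derivative Q) ^ 2).eval z) / (Q.eval z) ^ 2)
          * (P.eval z / Q.eval z * Complex.exp (μ * z))
        + μ ^ 2 * (P.eval z / Q.eval z * Complex.exp (μ * z))
      = -(Complex.exp (μ * z) / (Q.eval z) ^ 2)
          * ((derivative (derivative P) * Q - 2 * derivative P * derivative Q
              + P * derivative (derivative Q)
              + C (2 * μ) * (derivative P * Q - P * derivative Q)).eval z) := by
  rw [deriv_deriv_mul_cexp_const_mul μ Q.isOpen_setOf_eval_ne_zero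
      (P.differentiableOn_eval_div_eval Q) hz, P.deriv_deriv_eval_div_eval Q hz,
    (P.hasDerivAt_eval_div_eval Q hz).deriv]
  simp only [eval_mul, eval_sub, eval_add, eval_pow, eval_C, eval_ofNat]
  field_simp
  ring

/-- **Schrödinger form of the translating bilinear equation.**
For polynomials `P`, `Q`, `μ ∈ ℂ`, `ψ = (P/Q) e^{μz}` and `u = −2 (Q''Q − (Q')²)/Q²`,
one has `−ψ'' + uψ + μ²ψ = −(e^{μz}/Q²)(P''Q − 2P'Q' + PQ'' + 2μ(P'Q − PQ'))` wherever
`Q ≠ 0`; in particular if the bilinear expression vanishes identically then `ψ` is an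
eigenstate of `−d²/dz² + u` with eigenvalue `−μ²` on the set where `Q ≠ 0`. -/
theorem translating_schroedinger (P Q : Polynomial ℂ) (μ : ℂ) :
    (∀ z : ℂ, Q.eval z ≠ 0 →
      - deriv (deriv (fun w : ℂ => P.eval w / Q.eval w * Complex.exp (μ * w))) z
        + (-2 * ((Polynomial.derivative (Polynomial.derivative Q) * Q
              - (Polynomial.derivative Q) ^ 2).eval z) / (Q.eval z) ^ 2)
          * (P.eval z / Q.eval z * Complex.exp (μ * z))
        + μ ^ 2 * (P.eval z / Q.eval z * Complex.exp (μ * z))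
      = -(Complex.exp (μ * z) / (Q.eval z) ^ 2)
          * ((Polynomial.derivative (Polynomial.derivative P) * Q
              - 2 * Polynomial.derivative P * Polynomial.derivative Q
              + P * Polynomial.derivative (Polynomial.derivative Q)
              + Polynomial.C (2 * μ)
                * (Polynomial.derivative P * Q - P * Polynomial.derivative Q)).eval z))
    ∧ ((Polynomial.derivative (Polynomial.derivative P) * Q
          - 2 * Polynomial.derivative P * Polynomial.derivative Q
          + P * Polynomial.derivative (Polynomial.derivative Q)
          + Polynomial.C (2 * μ)
            * (Polynomial.derivative P * Q - P * Polynomial.derivative Q) = 0) →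
        ∀ z : ℂ, Q.eval z ≠ 0 →
          - deriv (deriv (fun w : ℂ => P.eval w / Q.eval w * Complex.exp (μ * w))) z
            + (-2 * ((Polynomial.derivative (Polynomial.derivative Q) * Q
                  - (Polynomial.derivative Q) ^ 2).eval z) / (Q.eval z) ^ 2)
              * (P.eval z / Q.eval z * Complex.exp (μ * z))
          = -μ ^ 2 * (P.eval z / Q.eval z * Complex.exp (μ * z))) := by
  refine ⟨fun z hz => schroedinger_eval_div_mul_cexp P Q μ hz, fun hbilinear z hz => ?_⟩
  have h := schroedinger_eval_div_mul_cexp P Q μ hz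
  rw [hbilinear, eval_zero, mul_zero] at h
  linear_combination h
end

section
/- Let μ ∈ ℂ and let z_1, …, z_m, ζ_1, …, ζ_n be m + n pairwise distinct complex numbers such that ∑_{k ≠ j} 1/(z_j − z_k) = −μ z_j + ∑_{ℓ=1}^{n} 1/(z_j − ζ_ℓ) for every j = 1, …, m, and ∑_{ℓ ≠ j} 1/(ζ_j − ζ_ℓ) = μ ζ_j + ∑_{k=1}^{m} 1/(ζ_j − z_k) for every j = 1, …, n (the stationarity equations for m positive and n negative unit vortices in a quadrupole background flow). Then the polynomials P(z) = ∏_{j=1}^{m}(z − z_j) and Q(z) = ∏_{ℓ=1}^{n}(z − ζ_ℓ) satisfy P''Q − 2P'Q' + PQ'' + 2μz(P'Q − PQ') − 2μ(m − n) PQ = 0 identically. -/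
/-!
Write `F` for the left-hand side, with `m = deg P` and `n = deg Q`. The second-order terms have
degree `< m + n`, and since `X P' - m P` and `X Q' - n Q` have degree `< m` and `< n`, so does
the first-order part `X (P'Q - PQ') - (m - n) PQ = (X P' - m P) Q - P (X Q' - n Q)`.
At a root `z_j` of `P = (X - z_j) R` one finds `F(z_j) = 2 (R'Q - RQ' + μ z R Q)(z_j)`, and the
values of `R'/R` and `Q'/Q` at `z_j` are the two sums in the stationarity equation, so
`F(z_j) = 0`. As `F` is invariant under `(P, Q, μ) ↦ (Q, P, -μ)`, the same holds at the `ζ_l`.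
Thus `F` vanishes at `m + n` distinct points, hence `F = 0`.
-/

open Finset

namespace Polynomial

section CommRing

variable {R : Type*} [CommRing R]

theorem degree_derivative_lt_natDegree (p : R[X]) :
    (derivative p).degree < (p.natDegree : WithBot ℕ) := by
  rcases eq_or_ne p.natDegree 0 with hp | hp
  · rw [derivative_of_natDegree_zero hp, hp, degree_zero]
    exact WithBot.bot_lt_coe 0
  · exact (degree_le_natDegree).trans_lt (WithBot.coe_lt_coe.mpr (natDegree_derivative_lt hp))

theorem degree_X_mul_derivative_sub_lt (p : R[X]) :
    (X * derivative p - C (p.natDegree : R) * p).degree < (p.natDegree : WithBot ℕ) := by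
  rw [degree_lt_iff_coeff_zero]
  intro k hk
  rcases k with _ | k
  · simp [Nat.le_zero.mp hk]
  · rw [coeff_sub, coeff_X_mul, coeff_derivative, coeff_C_mul]
    rcases hk.eq_or_lt with h | h
    · rw [h]; push_cast; ring
    · rw [coeff_eq_zero_of_natDegree_lt h]; ring

theorem degree_mul_lt_of_lt_of_le {p q : R[X]} {a b : ℕ} (hp : p.degree < a)
    (hq : q.degree ≤ b) :
    (p * q).degree < ↑(a + b) := by
  rcases eq_or_ne q 0 with rfl | hq0
  · simp
  · rw [Nat.cast_add]
    exact degree_mul_le_of_le le_rfl le_rfl |>.trans_lt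
      (WithBot.add_lt_add_of_lt_of_le (degree_ne_bot.mpr hq0) hp hq)

noncomputable def quadrupoleForm (μ : R) (P Q : R[X]) : R[X] :=
  derivative (derivative P) * Q - 2 * derivative P * derivative Q + P * derivative (derivative Q)
    + C (2 * μ) * X * (derivative P * Q - P * derivative Q)
    - C (2 * μ * ((P.natDegree : R) - (Q.natDegree : R))) * (P * Q)

theorem quadrupoleForm_swap (μ : R) (P Q : R[X]) :
    quadrupoleForm (-μ) Q P = quadrupoleForm μ P Q := by
  simp only [quadrupoleForm, map_mul, map_sub, map_neg]
  ring

theorem quadrupoleForm_eq (μ : R) (P Q : R[X]) :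
    quadrupoleForm μ P Q
      = derivative (derivative P) * Q - (2 : R) • (derivative P * derivative Q)
        + P * derivative (derivative Q)
        + (2 * μ) • ((X * derivative P - C (P.natDegree : R) * P) * Q
          - P * (X * derivative Q - C (Q.natDegree : R) * Q)) := by
  simp only [quadrupoleForm, smul_eq_C_mul, map_mul, map_sub, map_ofNat]
  ring

theorem degree_quadrupoleForm_lt (μ : R) (P Q : R[X]) :
    (quadrupoleForm μ P Q).degree < ↑(P.natDegree + Q.natDegree) := by
  have hP' := degree_derivative_lt_natDegree P
  have hQ' := degree_derivative_lt_natDegree Q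
  have hP'' := degree_derivative_le.trans_lt hP'
  have hQ'' := degree_derivative_le.trans_lt hQ'
  rw [← mem_degreeLT, quadrupoleForm_eq]
  refine add_mem (add_mem (sub_mem ?_ (Submodule.smul_mem _ _ ?_)) ?_)
    (Submodule.smul_mem _ _ (sub_mem ?_ ?_)) <;> rw [mem_degreeLT]
  · exact degree_mul_lt_of_lt_of_le hP'' degree_le_natDegree
  · exact degree_mul_lt_of_lt_of_le hP' hQ'.le
  · rw [mul_comm, add_comm]
    exact degree_mul_lt_of_lt_of_le hQ'' degree_le_natDegree
  · exact degree_mul_lt_of_lt_of_le (degree_X_mul_derivative_sub_lt P) degree_le_natDegree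
  · rw [mul_comm, add_comm]
    exact degree_mul_lt_of_lt_of_le (degree_X_mul_derivative_sub_lt Q) degree_le_natDegree

end CommRing

section Field

variable {K : Type*} [Field K]

theorem eval_derivative_prod_X_sub_C {ι : Type*} (s : Finset ι) (r : ι → K)
    {a : K} (ha : ∀ i ∈ s, a ≠ r i) :
    eval a (derivative (∏ i ∈ s, (X - C (r i))))
      = (∏ i ∈ s, (a - r i)) * ∑ i ∈ s, 1 / (a - r i) := by
  classical
  rw [derivative_prod_finset, eval_finsetSum, mul_sum]
  refine sum_congr rfl fun i hi => ?_
  have hai : a - r i ≠ 0 := sub_ne_zero.mpr (ha i hi)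
  simp only [eval_prod, eval_sub, eval_X, eval_C, derivative_sub, derivative_X,
    derivative_C, sub_zero, mul_one]
  rw [← mul_prod_erase s _ hi]
  field_simp

theorem eval_derivative_X_sub_C_mul (a : K) (R : K[X]) :
    eval a (derivative ((X - C a) * R)) = eval a R := by
  simp

theorem eval_derivative_derivative_X_sub_C_mul (a : K) (R : K[X]) :
    eval a (derivative (derivative ((X - C a) * R))) = 2 * eval a (derivative R) := by
  simp only [derivative_mul, derivative_sub, derivative_X, derivative_C, sub_zero,
    derivative_one, derivative_add, eval_add, eval_mul, eval_sub, eval_X, eval_C, eval_one,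
    eval_zero, sub_self]
  ring

theorem eval_quadrupoleForm_prod_eq_zero {ι κ : Type*} [Fintype ι] [DecidableEq ι] [Fintype κ]
    {μ : K} {z : ι → K} {ζ : κ → K} (hz : Function.Injective z) (hzζ : ∀ j l, z j ≠ ζ l)
    {j : ι} (hj : ∑ k ∈ univ.erase j, 1 / (z j - z k) = -μ * z j + ∑ l, 1 / (z j - ζ l)) :
    eval (z j) (quadrupoleForm μ (∏ i, (X - C (z i))) (∏ l, (X - C (ζ l)))) = 0 := by
  rw [← mul_prod_erase univ _ (mem_univ j)]
  have eR : eval (z j) (∏ k ∈ univ.erase j, (X - C (z k)))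
      = ∏ k ∈ univ.erase j, (z j - z k) := by
    simp [eval_prod]
  have eR' := eval_derivative_prod_X_sub_C (univ.erase j) z
    (fun k hk => hz.ne (ne_of_mem_erase hk).symm)
  have eQ : eval (z j) (∏ l, (X - C (ζ l))) = ∏ l, (z j - ζ l) := by simp [eval_prod]
  have eQ' := eval_derivative_prod_X_sub_C univ ζ (fun l _ => hzζ j l)
  simp only [quadrupoleForm, eval_sub, eval_add, eval_mul, eval_ofNat, eval_C, eval_X,
    eval_derivative_X_sub_C_mul, eval_derivative_derivative_X_sub_C_mul, eR, eR', eQ, eQ',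
    sub_self, zero_mul, mul_zero]
  linear_combination (2 * (∏ k ∈ univ.erase j, (z j - z k)) * ∏ l, (z j - ζ l)) * hj

end Field

end Polynomial

open Polynomial

/-- **Quadrupole background flow equilibria satisfy the bilinear equation.**
If `z_1, …, z_m, ζ_1, …, ζ_n` are pairwise distinct and satisfy the stationarity
equations for `m` positive and `n` negative unit vortices in a quadrupole background
flow with parameter `μ`, then `P = ∏ (z − z_j)`, `Q = ∏ (z − ζ_ℓ)` satisfy
`P''Q − 2P'Q' + PQ'' + 2μz(P'Q − PQ') − 2μ(m − n)PQ = 0`. -/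
theorem quadrupole_vortices_bilinear (μ : ℂ) (m n : ℕ) (z : Fin m → ℂ) (ζ : Fin n → ℂ)
    (hz : Function.Injective z) (hζ : Function.Injective ζ)
    (hzζ : ∀ (j : Fin m) (k : Fin n), z j ≠ ζ k)
    (h1 : ∀ j : Fin m,
      ∑ k ∈ Finset.univ.erase j, 1 / (z j - z k)
        = -μ * z j + ∑ l : Fin n, 1 / (z j - ζ l))
    (h2 : ∀ j : Fin n,
      ∑ l ∈ Finset.univ.erase j, 1 / (ζ j - ζ l)
        = μ * ζ j + ∑ k : Fin m, 1 / (ζ j - z k))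
    (P Q : Polynomial ℂ)
    (hP : P = ∏ j : Fin m, (Polynomial.X - Polynomial.C (z j)))
    (hQ : Q = ∏ l : Fin n, (Polynomial.X - Polynomial.C (ζ l))) :
    Polynomial.derivative (Polynomial.derivative P) * Q
      - 2 * Polynomial.derivative P * Polynomial.derivative Q
      + P * Polynomial.derivative (Polynomial.derivative Q)
      + Polynomial.C (2 * μ) * Polynomial.X
        * (Polynomial.derivative P * Q - P * Polynomial.derivative Q)
      - Polynomial.C (2 * μ * ((m : ℂ) - (n : ℂ))) * (P * Q) = 0 := by
  have hPdeg : P.natDegree = m := by simp [hP]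
  have hQdeg : Q.natDegree = n := by simp [hQ]
  have key : quadrupoleForm μ P Q = 0 := by
    refine eq_zero_of_degree_lt_of_eval_index_eq_zero (v := Sum.elim z ζ) univ
      ((hz.sumElim hζ hzζ).injOn) ?_ ?_
    · simpa [hPdeg, hQdeg] using degree_quadrupoleForm_lt μ P Q
    · subst hP hQ
      rintro (j | l) -
      · exact eval_quadrupoleForm_prod_eq_zero hz hzζ (h1 j)
      · rw [← quadrupoleForm_swap]
        exact eval_quadrupoleForm_prod_eq_zero hζ (fun l k => (hzζ k l).symm)
          (by rw [neg_neg]; exact h2 l)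
  rwa [quadrupoleForm, hPdeg, hQdeg] at key
end

section
/- Let k_1, …, k_ℓ be pairwise distinct nonnegative integers (ℓ ≥ 1). Then the Wronskian W(H_{k_1}, …, H_{k_ℓ}) of the corresponding physicist's Hermite polynomials is a nonzero polynomial of degree exactly k_1 + k_2 + … + k_ℓ − ℓ(ℓ−1)/2. -/
open Polynomial

/-- The physicist's Hermite polynomials over `ℂ`. -/
noncomputable def physHermite : ℕ → Polynomial ℂ
  | 0 => 1
  | 1 => 2 * Polynomial.X
  | n + 2 => 2 * Polynomial.X * physHermite (n + 1)
      - Polynomial.C (2 * ((n : ℂ) + 1)) * physHermite n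

/-!
A Wronskian of nonzero polynomials `p_j` of pairwise distinct degrees `d_j` is itself nonzero of
degree `∑ d_j - ℓ(ℓ-1)/2`: the entry `p_j^{(i)}` has degree at most `d_j - i`, so each term of the
Leibniz expansion has degree at most `∑ d_j - ∑ i`, and the coefficient of that power is
`det [d_j^{(i)} · lc p_j]` (falling factorials), which is `∏ lc p_j` times the Vandermonde
determinant of the `d_j`. For Hermite polynomials it then suffices that `deg H_n = n`.
-/

namespace Polynomial

theorem coeff_prod_sum_of_natDegree_le {R ι : Type*} [CommSemiring R] (s : Finset ι)
    (g : ι → R[X]) (d : ι → ℕ) (h : ∀ i ∈ s, (g i).natDegree ≤ d i) :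
    (∏ i ∈ s, g i).coeff (∑ i ∈ s, d i) = ∏ i ∈ s, (g i).coeff (d i) := by
  classical
  induction s using Finset.induction_on with
  | empty => simp
  | insert a s ha ih =>
    have hs : ∀ i ∈ s, (g i).natDegree ≤ d i := fun i hi => h i (Finset.mem_insert_of_mem hi)
    rw [Finset.prod_insert ha, Finset.sum_insert ha, Finset.prod_insert ha,
      coeff_mul_add_eq_of_natDegree_le (h a (Finset.mem_insert_self a s))
        ((natDegree_prod_le s g).trans (Finset.sum_le_sum hs)), ih hs]

theorem coeff_iterate_derivative_natDegree_sub {R : Type*} [Semiring R] (p : R[X]) (i : ℕ) :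
    (derivative^[i] p).coeff (p.natDegree - i) = p.natDegree.descFactorial i • p.leadingCoeff := by
  rcases le_or_gt i p.natDegree with hi | hi
  · rw [coeff_iterate_derivative, Nat.sub_add_cancel hi, leadingCoeff]
  · rw [iterate_derivative_eq_zero hi, Nat.descFactorial_eq_zero_iff_lt.mpr hi]
    simp

end Polynomial

namespace Matrix

variable {R n : Type*} [CommRing R] [Fintype n]

theorem sum_le_sum_of_det_ne_zero [DecidableEq n] {M : Matrix n n R} {e f : n → ℕ}
    (hM : M.det ≠ 0) (hM0 : ∀ i j, f j < e i → M i j = 0) : ∑ i, e i ≤ ∑ j, f j := by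
  rw [det_apply] at hM
  obtain ⟨σ, -, hσ⟩ := Finset.exists_ne_zero_of_sum_ne_zero hM
  have hle : ∀ j, e (σ j) ≤ f j := fun j => by
    by_contra! hj
    have hzero : ∏ i, M (σ i) i = 0 := Finset.prod_eq_zero (Finset.mem_univ j) (hM0 _ _ hj)
    exact hσ (by rw [hzero, smul_zero])
  calc ∑ i, e i = ∑ j, e (σ j) := (Equiv.sum_comp σ e).symm
    _ ≤ ∑ j, f j := Finset.sum_le_sum fun j _ => hle j

section WeightedDegree

variable {A : Matrix n n R[X]} {e f : n → ℕ}

/- `hA0` makes up for the truncated subtraction in `f j - e i`. -/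
theorem natDegree_prod_perm_le_and_coeff (hA : ∀ i j, (A i j).natDegree ≤ f j - e i)
    (hA0 : ∀ i j, f j < e i → A i j = 0) (σ : Equiv.Perm n) :
    (∏ j, A (σ j) j).natDegree ≤ ∑ j, f j - ∑ i, e i ∧
      (∏ j, A (σ j) j).coeff (∑ j, f j - ∑ i, e i) = ∏ j, (A (σ j) j).coeff (f j - e (σ j)) := by
  by_cases hσ : ∀ j, e (σ j) ≤ f j
  · have hsum : ∑ j, f j - ∑ i, e i = ∑ j, (f j - e (σ j)) := by
      rw [Finset.sum_tsub_distrib _ fun j _ => hσ j, Equiv.sum_comp σ e]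
    rw [hsum]
    exact ⟨(natDegree_prod_le _ _).trans (Finset.sum_le_sum fun j _ => hA _ _),
      coeff_prod_sum_of_natDegree_le _ _ _ fun j _ => hA _ _⟩
  · push Not at hσ
    obtain ⟨j, hj⟩ := hσ
    have hzero : ∏ j, A (σ j) j = 0 := Finset.prod_eq_zero (Finset.mem_univ j) (hA0 _ _ hj)
    have hzero' : ∏ j, (A (σ j) j).coeff (f j - e (σ j)) = 0 :=
      Finset.prod_eq_zero (Finset.mem_univ j) (by rw [hA0 _ _ hj, coeff_zero])
    simp [hzero, hzero']

variable [DecidableEq n]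

theorem natDegree_det_le_sum_sub_sum (hA : ∀ i j, (A i j).natDegree ≤ f j - e i)
    (hA0 : ∀ i j, f j < e i → A i j = 0) :
    A.det.natDegree ≤ ∑ j, f j - ∑ i, e i := by
  rw [det_apply]
  refine natDegree_sum_le_of_forall_le _ _ fun σ _ => ?_
  exact (natDegree_smul_le _ _).trans (natDegree_prod_perm_le_and_coeff hA hA0 σ).1

theorem coeff_det_sum_sub_sum (hA : ∀ i j, (A i j).natDegree ≤ f j - e i)
    (hA0 : ∀ i j, f j < e i → A i j = 0) :
    A.det.coeff (∑ j, f j - ∑ i, e i) = (of fun i j => (A i j).coeff (f j - e i)).det := by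
  simp only [det_apply, finsetSum_coeff, coeff_smul, of_apply,
    (natDegree_prod_perm_le_and_coeff hA hA0 _).2]

theorem natDegree_det_add_sum_eq (hA : ∀ i j, (A i j).natDegree ≤ f j - e i)
    (hA0 : ∀ i j, f j < e i → A i j = 0)
    (hlead : (of fun i j => (A i j).coeff (f j - e i)).det ≠ 0) :
    A.det ≠ 0 ∧ A.det.natDegree + ∑ i, e i = ∑ j, f j := by
  have hsum : ∑ i, e i ≤ ∑ j, f j :=
    sum_le_sum_of_det_ne_zero hlead fun i j hij => by simp [hA0 i j hij]
  rw [← coeff_det_sum_sub_sum hA hA0] at hlead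
  refine ⟨fun h => hlead (by rw [h, coeff_zero]), ?_⟩
  have := le_antisymm (natDegree_det_le_sum_sub_sum hA hA0) (le_natDegree_of_ne_zero hlead)
  omega

end WeightedDegree

theorem det_descFactorial {R : Type*} [CommRing R] [IsDomain R] {l : ℕ} (d : Fin l → ℕ) :
    (of fun i j : Fin l => ((d j).descFactorial i : R)).det =
      (vandermonde fun j => (d j : R)).det := by
  rw [det_eval_matrixOfPolynomials_eq_det_vandermonde _ (fun i => descPochhammer R i)
    (fun i => descPochhammer_natDegree R i) (fun i => monic_descPochhammer R i), ← det_transpose]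
  congr 1
  ext i j
  simp [descPochhammer_eval_eq_descFactorial]

end Matrix

theorem wronskian_ne_zero_and_natDegree_add {l : ℕ} (p : Fin l → ℂ[X]) (hp : ∀ j, p j ≠ 0)
    (hdeg : Function.Injective fun j => (p j).natDegree) :
    wronskian p ≠ 0 ∧ (wronskian p).natDegree + ∑ i : Fin l, (i : ℕ) = ∑ j, (p j).natDegree := by
  refine Matrix.natDegree_det_add_sum_eq (e := fun i : Fin l => (i : ℕ))
    (f := fun j => (p j).natDegree)
    (fun i j => natDegree_iterate_derivative _ _) (fun i j hij => iterate_derivative_eq_zero hij) ?_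
  simp only [Matrix.of_apply, coeff_iterate_derivative_natDegree_sub, nsmul_eq_mul, mul_comm]
  have hlead : (Matrix.of fun i j : Fin l =>
        (p j).leadingCoeff * ((p j).natDegree.descFactorial i : ℂ)).det =
      (∏ j, (p j).leadingCoeff) * (Matrix.vandermonde fun j => ((p j).natDegree : ℂ)).det := by
    rw [← Matrix.det_descFactorial]
    exact Matrix.det_mul_row _ _
  rw [hlead]
  exact mul_ne_zero (Finset.prod_ne_zero_iff.mpr fun j _ => leadingCoeff_ne_zero.mpr (hp j))
    (Matrix.det_vandermonde_ne_zero_iff.mpr (Nat.cast_injective.comp hdeg))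

theorem physHermite_add_two (n : ℕ) :
    physHermite (n + 2) = 2 * X * physHermite (n + 1) - C (2 * ((n : ℂ) + 1)) * physHermite n :=
  rfl

theorem natDegree_physHermite_le : ∀ n, (physHermite n).natDegree ≤ n
  | 0 => by simp [physHermite]
  | 1 => by simp [physHermite]
  | n + 2 => by
    rw [physHermite_add_two]
    refine (natDegree_sub_le _ _).trans (max_le ?_ ?_)
    · exact natDegree_mul_le_of_le (natDegree_mul_le_of_le (natDegree_ofNat 2).le natDegree_X_le)
        (natDegree_physHermite_le (n + 1)) |>.trans (by omega)
    · exact (natDegree_C_mul_le _ _).trans ((natDegree_physHermite_le n).trans (by omega))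

theorem coeff_physHermite_self : ∀ n, (physHermite n).coeff n = 2 ^ n
  | 0 => by simp [physHermite]
  | 1 => by simp [physHermite]
  | n + 2 => by
    have hlow : (physHermite n).coeff (n + 2) = 0 :=
      coeff_eq_zero_of_natDegree_lt ((natDegree_physHermite_le n).trans_lt (by omega))
    rw [physHermite_add_two, coeff_sub, coeff_C_mul, hlow, mul_assoc, coeff_ofNat_mul, coeff_X_mul,
      coeff_physHermite_self (n + 1)]
    ring

theorem natDegree_physHermite (n : ℕ) : (physHermite n).natDegree = n :=
  natDegree_eq_of_le_of_coeff_ne_zero (natDegree_physHermite_le n)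
    (by rw [coeff_physHermite_self]; exact pow_ne_zero n two_ne_zero)

theorem physHermite_ne_zero (n : ℕ) : physHermite n ≠ 0 := fun h =>
  pow_ne_zero n (two_ne_zero : (2 : ℂ) ≠ 0) (by rw [← coeff_physHermite_self, h, coeff_zero])

theorem sum_fin_val_mul_two (l : ℕ) : (∑ i : Fin l, (i : ℤ)) * 2 = l * (l - 1) := by
  induction l with
  | zero => simp
  | succ l ih =>
    rw [Fin.sum_univ_castSucc, add_mul]
    simp only [Fin.val_castSucc, Fin.val_last, ih]
    push_cast
    ring

theorem hermiteWronskian_ne_zero_and_degree_general (l : ℕ) (k : Fin l → ℕ)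
    (hinj : Function.Injective k) :
    wronskian (fun i : Fin l => physHermite (k i)) ≠ 0 ∧
    ((wronskian (fun i : Fin l => physHermite (k i))).natDegree : ℤ)
      = (∑ i : Fin l, (k i : ℤ)) - (l : ℤ) * ((l : ℤ) - 1) / 2 := by
  obtain ⟨hne, hdeg⟩ := wronskian_ne_zero_and_natDegree_add (fun i => physHermite (k i))
    (fun i => physHermite_ne_zero _) (by simpa only [natDegree_physHermite] using hinj)
  refine ⟨hne, ?_⟩
  simp only [natDegree_physHermite] at hdeg
  rw [← sum_fin_val_mul_two, Int.mul_ediv_cancel _ two_ne_zero]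
  have := congrArg (Nat.cast : ℕ → ℤ) hdeg
  push_cast at this
  linarith

/-- **Degree of a Wronskian of distinct Hermite polynomials.**
For pairwise distinct nonnegative integers `k_1, …, k_ℓ` (with `ℓ ≥ 1`), the Wronskian
`W(H_{k_1}, …, H_{k_ℓ})` is a nonzero polynomial of degree exactly
`k_1 + … + k_ℓ − ℓ(ℓ−1)/2`. -/
theorem hermiteWronskian_ne_zero_and_degree (l : ℕ) (hl : 1 ≤ l) (k : Fin l → ℕ)
    (hinj : Function.Injective k) :
    wronskian (fun i : Fin l => physHermite (k i)) ≠ 0 ∧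
    ((wronskian (fun i : Fin l => physHermite (k i))).natDegree : ℤ)
      = (∑ i : Fin l, (k i : ℤ)) - (l : ℤ) * ((l : ℤ) - 1) / 2 :=
  hermiteWronskian_ne_zero_and_degree_general l k hinj
end

section
/- The polynomials P(z) = (z+1)³ and Q(z) = (z+1)(z+2), of degrees m = 3 and n = 2, satisfy the quadrupole bilinear equation P''Q − 2P'Q' + PQ'' − 2z(P'Q − PQ') + 2(m−n)PQ = 0 identically in z, and P and Q have the common root z = −1 (so that P and Q are not coprime); hence the quadrupole bilinear equation admits polynomial solution pairs with common roots, beyond the coprime pairs formed by consecutive Wronskians of distinct Hermite polynomials. -/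
open Polynomial

/-- **Non-coprime solutions of the quadrupole bilinear equation exist.**
The polynomials `P = (z+1)³` (degree `m = 3`) and `Q = (z+1)(z+2)` (degree `n = 2`)
satisfy the quadrupole bilinear equation
`P''Q − 2P'Q' + PQ'' − 2z(P'Q − PQ') + 2(m−n)PQ = 0` identically, and they share the
common root `z = −1`, so they are not coprime: the quadrupole bilinear equation admits
polynomial solution pairs with common roots. -/
theorem quadrupole_noncoprime_solution :
    ((Polynomial.X + 1 : Polynomial ℂ) ^ 3).natDegree = 3 ∧
    ((Polynomial.X + 1 : Polynomial ℂ) * (Polynomial.X + 2)).natDegree = 2 ∧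
    (Polynomial.derivative (Polynomial.derivative ((Polynomial.X + 1 : Polynomial ℂ) ^ 3))
        * ((Polynomial.X + 1) * (Polynomial.X + 2))
      - 2 * Polynomial.derivative ((Polynomial.X + 1 : Polynomial ℂ) ^ 3)
          * Polynomial.derivative ((Polynomial.X + 1) * (Polynomial.X + 2))
      + (Polynomial.X + 1) ^ 3
          * Polynomial.derivative
              (Polynomial.derivative ((Polynomial.X + 1 : Polynomial ℂ) * (Polynomial.X + 2)))
      - 2 * Polynomial.X
        * (Polynomial.derivative ((Polynomial.X + 1 : Polynomial ℂ) ^ 3)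
              * ((Polynomial.X + 1) * (Polynomial.X + 2))
            - (Polynomial.X + 1) ^ 3
                * Polynomial.derivative ((Polynomial.X + 1 : Polynomial ℂ) * (Polynomial.X + 2)))
      + Polynomial.C ((2 : ℂ) * ((3 : ℂ) - 2))
          * ((Polynomial.X + 1) ^ 3 * ((Polynomial.X + 1) * (Polynomial.X + 2))) = 0) ∧
    ((Polynomial.X + 1 : Polynomial ℂ) ^ 3).eval (-1) = 0 ∧
    ((Polynomial.X + 1 : Polynomial ℂ) * (Polynomial.X + 2)).eval (-1) = 0 ∧
    ¬ IsCoprime ((Polynomial.X + 1 : Polynomial ℂ) ^ 3)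
        ((Polynomial.X + 1 : Polynomial ℂ) * (Polynomial.X + 2)) := by
  refine ⟨by compute_degree!, by compute_degree!, ?_, by simp, by simp, fun h ↦ ?_⟩
  · have hP' : derivative ((X + 1 : ℂ[X]) ^ 3) = 3 * (X + 1) ^ 2 := by
      simp [derivative_pow, C_ofNat]
    have hP'' : derivative (3 * (X + 1 : ℂ[X]) ^ 2) = 6 * (X + 1) := by
      rw [derivative_mul, derivative_sq]
      simp only [derivative_ofNat, zero_mul, C_ofNat, derivative_add, derivative_X,
        derivative_one, add_zero, mul_one, zero_add]
      ring
    have hQ' : derivative ((X + 1 : ℂ[X]) * (X + 2)) = 2 * X + 3 := by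
      simp only [derivative_mul, derivative_add, derivative_X, derivative_one, add_zero,
        one_mul, derivative_ofNat, mul_one]
      ring
    have hQ'' : derivative (2 * X + 3 : ℂ[X]) = 2 := by simp
    have hc : C ((2 : ℂ) * (3 - 2)) = 2 := by norm_num [C_ofNat]
    rw [hP', hP'', hQ', hQ'', hc]
    ring
  · simpa using aeval_ne_zero_of_isCoprime h (-1 : ℂ)
end
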